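/- Under the i.i.d. sampling assumption, the finite-sample conformal instance-segmentation procedure (Algorithm 3: greedy parameter ranking on the first n₁ calibration samples, followed by Conformal Risk Control on the remaining n₂ samples with duplicate removal by Unique*) satisfies, for every finite sample size, P( max_{ŷ ∈ C_{λ̂}(X^test)} IoU(Y^test, ŷ) > τ ) ≥ 1 − α. -/

import Mathlib

open MeasureTheory ProbabilityTheory
open scoped Classical

/-- A binary mask on a `W × H` grid: `true` encodes the value 1. -/
abbrev Mask (W H : ℕ) := Fin W × Fin H → Bool

/-- Intersection-over-Union of two binary masks, with the convention
`IoU A B = 1` when the union is empty. -/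
noncomputable def IoU {W H : ℕ} (A B : Mask W H) : ℝ :=
  if (Finset.univ.filter (fun p : Fin W × Fin H => A p = true ∨ B p = true)).card = 0 then 1
  else ((Finset.univ.filter (fun p : Fin W × Fin H => A p = true ∧ B p = true)).card : ℝ) /
    ((Finset.univ.filter (fun p : Fin W × Fin H => A p = true ∨ B p = true)).card : ℝ)

/-- The duplicate-removal procedure `Unique*` on finite lists of masks:
`Unique*([], η) = []` and `Unique*(C ++ [x], η)` keeps `x` iff no already-kept mask
has `IoU` with `x` exceeding `η`. -/
noncomputable def uniqueStar {W H : ℕ} (η : ℝ) (C : List (Mask W H)) : List (Mask W H) :=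
  C.foldl (fun acc x => if ∃ y ∈ acc, η < IoU x y then acc else acc ++ [x]) ([])

variable {𝒳 : Type*} {W H k : ℕ}

/-- `S_j`: indices `i ∈ {1,…,n₁}` of first-stage calibration points on which parameter
`j` yields a prediction with `IoU` exceeding `τ`. -/
noncomputable def covSet (f : 𝒳 → Fin k → Mask W H) (τ : ℝ)
    (samp : ℕ → 𝒳 × Mask W H) (n₁ : ℕ) (j : Fin k) : Finset ℕ :=
  (Finset.Icc 1 n₁).filter (fun i => τ < IoU (samp i).2 (f (samp i).1 j))

/-- The number of elements of `S j` not already covered by the previously ranked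
parameters `L 0, …, L (r-1)` (greedy gain at rank `r`). -/
noncomputable def gain (S : Fin k → Finset ℕ) (L : Fin k → Fin k) (r j : Fin k) : ℕ :=
  (S j \ (Finset.univ.filter (fun r' => r' < r)).biUnion (fun r' => S (L r'))).card

/-- The ordered list of predictions `[f(x, t_{L 1}), …, f(x, t_{L λ})]` at the first
`λ` ranked parameter values. -/
def predList (f : 𝒳 → Fin k → Mask W H) (L : Fin k → Fin k) (lam : ℕ) (x : 𝒳) :
    List (Mask W H) :=
  ((List.finRange k).take lam).map (fun r => f x (L r))

/-- The 0/1 loss: `1` iff no mask of the duplicate-removed prediction set `C_λ(x)`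
has `IoU` with the true mask exceeding `τ` (in particular `1` when the set is empty). -/
noncomputable def lossAt (f : 𝒳 → Fin k → Mask W H) (τ η : ℝ) (L : Fin k → Fin k)
    (lam : ℕ) (xy : 𝒳 × Mask W H) : ℝ :=
  if ∀ yhat ∈ uniqueStar η (predList f L lam xy.1), IoU xy.2 yhat ≤ τ then 1 else 0

/-- The empirical risk `r̂(λ)` over the second-stage calibration points
`n₁+1, …, n₁+n₂`. -/
noncomputable def empRisk (f : 𝒳 → Fin k → Mask W H) (τ η : ℝ) (L : Fin k → Fin k)
    (samp : ℕ → 𝒳 × Mask W H) (n₁ n₂ : ℕ) (lam : ℕ) : ℝ :=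
  (1 / (n₂ : ℝ)) * ∑ i ∈ Finset.Icc (n₁ + 1) (n₁ + n₂), lossAt f τ η L lam (samp i)

open scoped ENNReal

/-! The greedy ranking only looks at the first `n₁` samples, so the argument is conformal risk
control on the `n₂ + 1` exchangeable points `Z 0, Z (n₁+1), …, Z (n₁+n₂)`. Let `λ̃` be the
smallest `λ` whose total loss on all `n₂ + 1` points, test point included, is at most
`(n₂ + 1) α`. A loss is at most `1`, so `λ̂ ≤ k` forces `λ̃ ≤ λ̂`; and `Unique*` of a longer list
extends that of a shorter one, so the loss is antitone in `λ`. Hence if the test point is missed,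
it has loss `1` at `λ̃`. Since `λ̃` is a symmetric function of the `n₂ + 1` points, exchangeability
gives this event the same probability at each of them, while at most `(n₂ + 1) α` of them can
have loss `1` at `λ̃`; so its probability is at most `α`. If `λ̂ = k + 1`, the prediction set
contains the true mask, whose `IoU` with itself is `1 > τ`. -/

theorem MeasurableSet.of_factor {α β : Type*} [MeasurableSpace α] [MeasurableSpace β]
    [Countable β] [MeasurableSingletonClass β] {φ : α → β} (hφ : Measurable φ) {s : Set α}
    (hs : ∀ a b, φ a = φ b → a ∈ s → b ∈ s) : MeasurableSet s := by
  have : φ ⁻¹' (φ '' s) = s :=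
    Set.Subset.antisymm (fun b ⟨a, ha, hab⟩ => hs a b hab ha) (Set.subset_preimage_image φ s)
  exact this ▸ hφ (Set.to_countable _).measurableSet

theorem card_mul_measure_le_of_measurePreserving {α ι : Type*} [MeasurableSpace α]
    {μ : Measure α} [IsProbabilityMeasure μ] (s : Finset ι) {T : ι → α → α}
    (hT : ∀ i ∈ s, MeasurePreserving (T i) μ μ) {B : Set α} (hB : MeasurableSet B) {c : ℝ≥0∞}
    (hcount : ∀ x, ((s.filter fun i => T i x ∈ B).card : ℝ≥0∞) ≤ c) :
    s.card * μ B ≤ c := by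
  calc (s.card : ℝ≥0∞) * μ B = ∑ i ∈ s, μ (T i ⁻¹' B) := by
        rw [Finset.sum_congr rfl fun i hi => (hT i hi).measure_preimage hB.nullMeasurableSet,
          Finset.sum_const, nsmul_eq_mul]
    _ = ∫⁻ x, ∑ i ∈ s, (T i ⁻¹' B).indicator 1 x ∂μ := by
        rw [lintegral_finsetSum _ fun i hi => measurable_one.indicator ((hT i hi).measurable hB)]
        exact Finset.sum_congr rfl fun i hi =>
          (lintegral_indicator_one ((hT i hi).measurable hB)).symm
    _ ≤ ∫⁻ _, c ∂μ := lintegral_mono fun x => by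
        have hx := hcount x
        rw [Finset.card_filter] at hx
        simpa [Set.indicator_apply] using hx
    _ = c := by simp

theorem measurePreserving_comp_perm_infinitePi {ι β : Type*} [MeasurableSpace β]
    (P : Measure β) [IsProbabilityMeasure P] (σ : Equiv.Perm ι) :
    MeasurePreserving (fun v : ι → β => v ∘ σ) (Measure.infinitePi fun _ => P)
      (Measure.infinitePi fun _ => P) := by
  refine ⟨by fun_prop, ?_⟩
  convert Measure.infinitePi_map_piCongrLeft (X := fun _ : ι => β) (fun _ => P) σ.symm using 2
  ext v i
  simp [MeasurableEquiv.coe_piCongrLeft, Equiv.piCongrLeft_apply_eq_cast]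

lemma ofReal_one_sub_le_measure_of_compl_le {Ω : Type*} [MeasurableSpace Ω] {μ : Measure Ω}
    [IsProbabilityMeasure μ] {s : Set Ω} {a : ℝ} (ha : 0 ≤ a) (h : μ sᶜ ≤ ENNReal.ofReal a) :
    ENNReal.ofReal (1 - a) ≤ μ s :=
  calc ENNReal.ofReal (1 - a) = 1 - ENNReal.ofReal a := by
        rw [ENNReal.ofReal_sub _ ha, ENNReal.ofReal_one]
    _ ≤ 1 - μ sᶜ := tsub_le_tsub_left h 1
    _ ≤ μ s := tsub_le_iff_right.mpr (by simpa using measure_univ_le_add_compl (μ := μ) s)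

lemma IoU_self (A : Mask W H) : IoU A A = 1 := by
  simp only [IoU, and_self, or_self]
  split_ifs with h
  · rfl
  · exact div_self (by exact_mod_cast h)

lemma uniqueStar_prefix_of_prefix (η : ℝ) {C D : List (Mask W H)} (h : C <+: D) :
    uniqueStar η C <+: uniqueStar η D := by
  obtain ⟨E, rfl⟩ := h
  rw [uniqueStar, uniqueStar, List.foldl_append]
  generalize C.foldl _ [] = acc
  induction E generalizing acc with
  | nil => exact List.prefix_refl acc
  | cons x E ih =>
    rw [List.foldl_cons]
    split_ifs
    · exact ih acc
    · exact (List.prefix_append acc [x]).trans (ih _)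

section Loss

variable (f : 𝒳 → Fin k → Mask W H) (τ η : ℝ) (L : Fin k → Fin k)

lemma predList_prefix {lam lam' : ℕ} (h : lam ≤ lam') (x : 𝒳) :
    predList f L lam x <+: predList f L lam' x :=
  (List.take_prefix_take_left h).map _

lemma lossAt_eq_zero_or_one (lam : ℕ) (xy : 𝒳 × Mask W H) :
    lossAt f τ η L lam xy = 0 ∨ lossAt f τ η L lam xy = 1 := by
  unfold lossAt
  split_ifs <;> simp

lemma lossAt_nonneg (lam : ℕ) (xy : 𝒳 × Mask W H) : 0 ≤ lossAt f τ η L lam xy := by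
  rcases lossAt_eq_zero_or_one f τ η L lam xy with h | h <;> simp [h]

lemma lossAt_le_one (lam : ℕ) (xy : 𝒳 × Mask W H) : lossAt f τ η L lam xy ≤ 1 := by
  rcases lossAt_eq_zero_or_one f τ η L lam xy with h | h <;> simp [h]

lemma lossAt_eq_one_iff {lam : ℕ} {xy : 𝒳 × Mask W H} :
    lossAt f τ η L lam xy = 1 ↔
      ∀ yhat ∈ uniqueStar η (predList f L lam xy.1), IoU xy.2 yhat ≤ τ := by
  unfold lossAt
  split_ifs with h
  · exact iff_of_true rfl h
  · exact iff_of_false zero_ne_one h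

lemma lossAt_antitone (xy : 𝒳 × Mask W H) : Antitone fun lam => lossAt f τ η L lam xy := by
  intro lam lam' h
  by_cases hmiss : ∀ yhat ∈ uniqueStar η (predList f L lam' xy.1), IoU xy.2 yhat ≤ τ
  · have hmiss' : ∀ yhat ∈ uniqueStar η (predList f L lam xy.1), IoU xy.2 yhat ≤ τ :=
      fun yhat hy => hmiss yhat
        ((uniqueStar_prefix_of_prefix η (predList_prefix f L h xy.1)).subset hy)
    simp only [lossAt, if_pos hmiss, if_pos hmiss', le_refl]
  · simp only [lossAt, if_neg hmiss]
    exact lossAt_nonneg f τ η L lam xy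

lemma lossAt_congr {xy xy' : 𝒳 × Mask W H} (h₁ : f xy.1 = f xy'.1) (h₂ : xy.2 = xy'.2)
    (lam : ℕ) : lossAt f τ η L lam xy = lossAt f τ η L lam xy' := by
  have hpred : predList f L lam xy.1 = predList f L lam xy'.1 := by simp only [predList, h₁]
  rw [lossAt, lossAt, hpred, h₂]

lemma covSet_congr {samp samp' : ℕ → 𝒳 × Mask W H} {n₁ : ℕ}
    (h : ∀ i ∈ Finset.Icc 1 n₁, f (samp i).1 = f (samp' i).1 ∧ (samp i).2 = (samp' i).2) :
    covSet f τ samp n₁ = covSet f τ samp' n₁ :=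
  funext fun _ => Finset.filter_congr fun i hi => by rw [(h i hi).1, (h i hi).2]

lemma sum_lossAt_le_of_empRisk_le {α : ℝ} {samp : ℕ → 𝒳 × Mask W H} {n₁ n₂ lam : ℕ}
    (hn₂ : 0 < n₂) (h : empRisk f τ η L samp n₁ n₂ lam ≤ α - (1 - α) / n₂) :
    ∑ i ∈ insert 0 (Finset.Icc (n₁ + 1) (n₁ + n₂)), lossAt f τ η L lam (samp i) ≤
      (insert 0 (Finset.Icc (n₁ + 1) (n₁ + n₂))).card * α := by
  have hn : (0 : ℝ) < n₂ := by exact_mod_cast hn₂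
  have hcard : (insert 0 (Finset.Icc (n₁ + 1) (n₁ + n₂))).card = n₂ + 1 := by
    rw [Finset.card_insert_of_notMem (by simp), Nat.card_Icc]
    omega
  have hcal : ∑ i ∈ Finset.Icc (n₁ + 1) (n₁ + n₂), lossAt f τ η L lam (samp i) =
      n₂ * empRisk f τ η L samp n₁ n₂ lam := by
    rw [empRisk]
    field_simp
  have hscaled := mul_le_mul_of_nonneg_left h hn.le
  rw [mul_sub, mul_div_cancel₀ _ hn.ne'] at hscaled
  rw [Finset.sum_insert (by simp), hcal, hcard]
  push_cast
  linarith [lossAt_le_one f τ η L lam (samp 0)]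

end Loss

def IsGreedyRanking (S : Fin k → Finset ℕ) (L : Fin k → Fin k) : Prop :=
  ∀ r j, gain S L r j ≤ gain S L r (L r) ∧ (gain S L r j = gain S L r (L r) → L r ≤ j)

lemma gain_congr {S : Fin k → Finset ℕ} {L L' : Fin k → Fin k} {r : Fin k}
    (h : ∀ r' < r, L r' = L' r') (j : Fin k) : gain S L r j = gain S L' r j := by
  unfold gain
  congr 2
  exact Finset.biUnion_congr rfl fun r' hr' => by rw [h r' (Finset.mem_filter.mp hr').2]

lemma IsGreedyRanking.unique {S : Fin k → Finset ℕ} {L L' : Fin k → Fin k}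
    (h : IsGreedyRanking S L) (h' : IsGreedyRanking S L') : L = L' := by
  funext r
  induction r using WellFoundedLT.induction with
  | _ r ih =>
    have hg := gain_congr (S := S) ih
    have heq : gain S L r (L' r) = gain S L r (L r) :=
      le_antisymm (h r (L' r)).1 (by simpa only [hg] using (h' r (L r)).1)
    exact le_antisymm ((h r (L' r)).2 heq) ((h' r (L r)).2 (by simpa only [hg] using heq.symm))

section Oracle

variable (f : 𝒳 → Fin k → Mask W H) (τ η : ℝ)

/-- The threshold `λ̃` computed with the test point included; `sInf ∅ = 0 ∉ [1, k]` encodes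
that no `λ` qualifies. -/
noncomputable def oracleThreshold (L : Fin k → Fin k) (s : Finset ℕ) (c : ℝ)
    (v : ℕ → 𝒳 × Mask W H) : ℕ :=
  sInf {lam | lam ∈ Finset.Icc 1 k ∧ ∑ i ∈ s, lossAt f τ η L lam (v i) ≤ c}

/-- Quantifying over greedy rankings, which are unique, makes this a set of samples without
choosing the ranking as a function of them. -/
def oracleMiss (n₁ : ℕ) (s : Finset ℕ) (c : ℝ) : Set (ℕ → 𝒳 × Mask W H) :=
  {v | ∃ L, IsGreedyRanking (covSet f τ v n₁) L ∧
    oracleThreshold f τ η L s c v ∈ Finset.Icc 1 k ∧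
    lossAt f τ η L (oracleThreshold f τ η L s c v) (v 0) = 1}

variable {f τ η} {n₁ : ℕ} {L : Fin k → Fin k} {s : Finset ℕ} {c : ℝ} {v : ℕ → 𝒳 × Mask W H}

lemma sum_lossAt_oracleThreshold_le (h : oracleThreshold f τ η L s c v ∈ Finset.Icc 1 k) :
    ∑ i ∈ s, lossAt f τ η L (oracleThreshold f τ η L s c v) (v i) ≤ c :=
  (Nat.sInf_mem (Nat.nonempty_of_pos_sInf (Finset.mem_Icc.mp h).1)).2

lemma oracleThreshold_le {lam : ℕ} (hlam : lam ∈ Finset.Icc 1 k)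
    (hsum : ∑ i ∈ s, lossAt f τ η L lam (v i) ≤ c) :
    oracleThreshold f τ η L s c v ≤ lam ∧ oracleThreshold f τ η L s c v ∈ Finset.Icc 1 k := by
  have hmem : lam ∈ {lam | lam ∈ Finset.Icc 1 k ∧ ∑ i ∈ s, lossAt f τ η L lam (v i) ≤ c} :=
    ⟨hlam, hsum⟩
  exact ⟨Nat.sInf_le hmem, (Nat.sInf_mem ⟨lam, hmem⟩).1⟩

lemma oracleThreshold_comp_swap {i : ℕ} (h0 : 0 ∈ s) (hi : i ∈ s) :
    oracleThreshold f τ η L s c (v ∘ Equiv.swap 0 i) = oracleThreshold f τ η L s c v := by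
  have hsupp : {j | Equiv.swap 0 i j ≠ j} ⊆ s := fun j hj =>
    (Equiv.swap_apply_ne_self_iff.mp hj).2.elim (· ▸ h0) (· ▸ hi)
  have hsum (lam : ℕ) : ∑ j ∈ s, lossAt f τ η L lam (v (Equiv.swap 0 i j)) =
      ∑ j ∈ s, lossAt f τ η L lam (v j) :=
    (Equiv.swap 0 i).sum_comp s (fun j => lossAt f τ η L lam (v j)) hsupp
  simp only [oracleThreshold, Function.comp_apply, hsum]

lemma oracleThreshold_congr {v' : ℕ → 𝒳 × Mask W H}
    (h : ∀ i ∈ s, f (v i).1 = f (v' i).1 ∧ (v i).2 = (v' i).2) :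
    oracleThreshold f τ η L s c v = oracleThreshold f τ η L s c v' := by
  simp only [oracleThreshold,
    Finset.sum_congr rfl fun i hi => lossAt_congr f τ η L (h i hi).1 (h i hi).2 _]

lemma mem_oracleMiss_of_lossAt_eq_one {lam : ℕ}
    (hL : IsGreedyRanking (covSet f τ v n₁) L) (hlam : lam ∈ Finset.Icc 1 k)
    (hsum : ∑ i ∈ s, lossAt f τ η L lam (v i) ≤ c) (hmiss : lossAt f τ η L lam (v 0) = 1) :
    v ∈ oracleMiss f τ η n₁ s c := by
  obtain ⟨hle, hmem⟩ := oracleThreshold_le hlam hsum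
  refine ⟨L, hL, hmem, le_antisymm (lossAt_le_one f τ η L _ _) ?_⟩
  exact hmiss ▸ lossAt_antitone f τ η L (v 0) hle

lemma comp_swap_mem_oracleMiss_iff (h0 : 0 ∈ s) (hs : Disjoint s (Finset.Icc 1 n₁))
    (v : ℕ → 𝒳 × Mask W H) {i : ℕ} (hi : i ∈ s) :
    v ∘ Equiv.swap 0 i ∈ oracleMiss f τ η n₁ s c ↔
      ∃ L, IsGreedyRanking (covSet f τ v n₁) L ∧
        oracleThreshold f τ η L s c v ∈ Finset.Icc 1 k ∧
        lossAt f τ η L (oracleThreshold f τ η L s c v) (v i) = 1 := by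
  have hfix (j : ℕ) (hj : j ∈ Finset.Icc 1 n₁) : Equiv.swap 0 i j = j := by
    have hjs := Finset.disjoint_right.mp hs hj
    exact Equiv.swap_apply_of_ne_of_ne (by rintro rfl; exact hjs h0) (by rintro rfl; exact hjs hi)
  have hcov : covSet f τ (v ∘ Equiv.swap 0 i) n₁ = covSet f τ v n₁ :=
    covSet_congr f τ fun j hj => by simp only [Function.comp_apply, hfix j hj, and_self]
  simp only [oracleMiss, Set.mem_ofPred_eq, hcov, oracleThreshold_comp_swap h0 hi,
    Function.comp_apply, Equiv.swap_apply_left]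

lemma card_comp_swap_mem_oracleMiss_le (h0 : 0 ∈ s) (hs : Disjoint s (Finset.Icc 1 n₁))
    (v : ℕ → 𝒳 × Mask W H) :
    ((s.filter fun i => v ∘ Equiv.swap 0 i ∈ oracleMiss f τ η n₁ s c).card : ℝ≥0∞) ≤
      ENNReal.ofReal c := by
  by_cases hex : ∃ L, IsGreedyRanking (covSet f τ v n₁) L ∧
      oracleThreshold f τ η L s c v ∈ Finset.Icc 1 k
  · obtain ⟨L, hL, hmem⟩ := hex
    set lam := oracleThreshold f τ η L s c v
    have hfilter : s.filter (fun i => v ∘ Equiv.swap 0 i ∈ oracleMiss f τ η n₁ s c) =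
        s.filter (fun i => lossAt f τ η L lam (v i) = 1) :=
      Finset.filter_congr fun i hi => by
        rw [comp_swap_mem_oracleMiss_iff h0 hs v hi]
        refine ⟨fun ⟨L', hL', _, h⟩ => ?_, fun h => ⟨L, hL, hmem, h⟩⟩
        obtain rfl := hL'.unique hL
        exact h
    have hcount : ((s.filter fun i => lossAt f τ η L lam (v i) = 1).card : ℝ) =
        ∑ i ∈ s, lossAt f τ η L lam (v i) := by
      rw [Finset.card_filter, Nat.cast_sum]
      refine Finset.sum_congr rfl fun i _ => ?_
      rcases lossAt_eq_zero_or_one f τ η L lam (v i) with h | h <;> simp [h]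
    rw [hfilter, ← ENNReal.ofReal_natCast, hcount]
    exact ENNReal.ofReal_le_ofReal (sum_lossAt_oracleThreshold_le hmem)
  · rw [Finset.filter_false_of_mem fun i hi h => hex ?_]
    · simp
    obtain ⟨L, hL, hmem, -⟩ := (comp_swap_mem_oracleMiss_iff h0 hs v hi).1 h
    exact ⟨L, hL, hmem⟩

/-- The event only sees the predictions at the indices in `s ∪ [1, n₁]`, a finite type. -/
lemma measurableSet_oracleMiss [MeasurableSpace 𝒳] (hf : Measurable f) (h0 : 0 ∈ s) :
    MeasurableSet (oracleMiss f τ η n₁ s c) := by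
  let t := s ∪ Finset.Icc 1 n₁
  refine MeasurableSet.of_factor (φ := fun v (j : t) => (f (v j).1, (v j).2)) (by fun_prop) ?_
  rintro v v' hvv' ⟨L, hL, hmem, hmiss⟩
  have hview (i : ℕ) (hi : i ∈ t) : f (v i).1 = f (v' i).1 ∧ (v i).2 = (v' i).2 :=
    Prod.ext_iff.mp (congr_fun hvv' ⟨i, hi⟩)
  have hthr := oracleThreshold_congr (τ := τ) (η := η) (L := L) (c := c) fun i hi =>
    hview i (Finset.mem_union_left _ hi)
  have hv0 := hview 0 (Finset.mem_union_left _ h0)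
  refine ⟨L, ?_, hthr ▸ hmem, ?_⟩
  · rwa [← covSet_congr f τ fun i hi => hview i (Finset.mem_union_right _ hi)]
  · rwa [← hthr, ← lossAt_congr f τ η L hv0.1 hv0.2]

lemma infinitePi_oracleMiss_le [MeasurableSpace 𝒳] (P : Measure (𝒳 × Mask W H))
    [IsProbabilityMeasure P] (hf : Measurable f) (h0 : 0 ∈ s)
    (hs : Disjoint s (Finset.Icc 1 n₁)) (a : ℝ) :
    Measure.infinitePi (fun _ => P) (oracleMiss f τ η n₁ s (s.card * a)) ≤ ENNReal.ofReal a := by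
  have h := card_mul_measure_le_of_measurePreserving (B := oracleMiss f τ η n₁ s (s.card * a)) s
    (fun i _ => measurePreserving_comp_perm_infinitePi P (Equiv.swap 0 i))
    (measurableSet_oracleMiss hf h0) (card_comp_swap_mem_oracleMiss_le h0 hs)
  rw [ENNReal.ofReal_mul (by positivity), ENNReal.ofReal_natCast] at h
  exact (ENNReal.mul_le_mul_iff_right (Nat.cast_ne_zero.mpr (Finset.card_ne_zero_of_mem h0))
    (ENNReal.natCast_ne_top _)).mp h

end Oracle

theorem finite_sample_conformal_validity_general
    [MeasurableSpace 𝒳]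
    {Ω : Type*} [MeasurableSpace Ω] (Pr : Measure Ω) [IsProbabilityMeasure Pr]
    (P : Measure (𝒳 × Mask W H)) [IsProbabilityMeasure P]
    (f : 𝒳 → Fin k → Mask W H) (hf : ∀ j, Measurable (fun x => f x j))
    (α τ η : ℝ) (hα : α ∈ Set.Ioo (0:ℝ) 1) (hτ : τ ∈ Set.Ioo (0:ℝ) 1)
    (n₁ n₂ : ℕ) (hn₂ : 0 < n₂)
    (Z : ℕ → Ω → 𝒳 × Mask W H) (hZmeas : ∀ i, Measurable (Z i))
    (hindep : iIndepFun Z Pr)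
    (hlaw : ∀ i, Measure.map (Z i) Pr = P)
    -- greedy ranking of the parameters based on the first n₁ calibration samples:
    -- L[r] is the smallest index maximizing the number of newly covered points
    (L : Ω → Fin k → Fin k)
    (hL : ∀ (ω : Ω) (r j : Fin k),
      gain (covSet f τ (fun i => Z i ω) n₁) (L ω) r j
          ≤ gain (covSet f τ (fun i => Z i ω) n₁) (L ω) r (L ω r) ∧
        (gain (covSet f τ (fun i => Z i ω) n₁) (L ω) r j
            = gain (covSet f τ (fun i => Z i ω) n₁) (L ω) r (L ω r) → L ω r ≤ j))
    -- λ̂: the smallest λ ∈ {1,…,k} whose empirical risk on the n₂ second-stage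
    -- samples is ≤ α − (1−α)/n₂, and k+1 if no such λ exists
    (lamhat : Ω → ℕ)
    (hlamhat : ∀ ω : Ω,
      (lamhat ω ∈ Finset.Icc 1 k ∧
        empRisk f τ η (L ω) (fun i => Z i ω) n₁ n₂ (lamhat ω) ≤ α - (1 - α) / n₂ ∧
        ∀ lam ∈ Finset.Icc 1 k,
          empRisk f τ η (L ω) (fun i => Z i ω) n₁ n₂ lam ≤ α - (1 - α) / n₂ →
            lamhat ω ≤ lam) ∨
      (lamhat ω = k + 1 ∧
        ∀ lam ∈ Finset.Icc 1 k,
          ¬ (empRisk f τ η (L ω) (fun i => Z i ω) n₁ n₂ lam ≤ α - (1 - α) / n₂))) :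
    ENNReal.ofReal (1 - α) ≤
      Pr {ω | ∃ yhat ∈ (if lamhat ω = k + 1 then (Set.univ : Set (Mask W H))
          else {y | y ∈ uniqueStar η (predList f (L ω) (lamhat ω) (Z 0 ω).1)}),
        τ < IoU (Z 0 ω).2 yhat} := by
  set s := insert 0 (Finset.Icc (n₁ + 1) (n₁ + n₂))
  have h0 : 0 ∈ s := Finset.mem_insert_self _ _
  have hdisj : Disjoint s (Finset.Icc 1 n₁) := Finset.disjoint_left.mpr fun i hi hi' => by
    simp only [s, Finset.mem_insert, Finset.mem_Icc] at hi hi'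
    omega
  have hjoint : Pr.map (fun ω i => Z i ω) = Measure.infinitePi fun _ => P := by
    simp only [hindep.map_fun_eq_infinitePi_map hZmeas, hlaw]
  have hmeas := measurableSet_oracleMiss (τ := τ) (η := η) (n₁ := n₁) (c := s.card * α)
    (measurable_pi_lambda _ hf) h0
  apply ofReal_one_sub_le_measure_of_compl_le hα.1.le
  calc _ ≤ Pr ((fun ω i => Z i ω) ⁻¹' oracleMiss f τ η n₁ s (s.card * α)) := measure_mono ?_
    _ = Measure.infinitePi (fun _ => P) (oracleMiss f τ η n₁ s (s.card * α)) := by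
      rw [← hjoint, Measure.map_apply (measurable_pi_lambda _ hZmeas) hmeas]
    _ ≤ ENNReal.ofReal α := infinitePi_oracleMiss_le P (measurable_pi_lambda _ hf) h0 hdisj α
  intro ω hω
  rcases hlamhat ω with ⟨hmem, hrisk, -⟩ | ⟨hk1, -⟩
  · refine mem_oracleMiss_of_lossAt_eq_one (hL ω) hmem
      (sum_lossAt_le_of_empRisk_le f τ η (L ω) hn₂ hrisk) ((lossAt_eq_one_iff f τ η _).mpr ?_)
    have hne : lamhat ω ≠ k + 1 := by simp only [Finset.mem_Icc] at hmem; omega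
    intro yhat hy
    by_contra hlt
    exact hω ⟨yhat, by simpa [hne] using hy, not_le.mp hlt⟩
  · exact absurd ⟨(Z 0 ω).2, by simp [hk1], by rw [IoU_self]; exact hτ.2⟩ hω

/-- finite-sample validity of the conformal instance-segmentation
procedure (Algorithm 3): greedy parameter ranking `L` on the first `n₁` i.i.d.
calibration samples, Conformal Risk Control choice of `λ̂` on the remaining `n₂`
samples with duplicate removal by `Unique*`, and prediction set
`C_{λ̂}(X^test) = Unique*([f(X^test, t_{L 1}), …, f(X^test, t_{L λ̂})], η)` if `λ̂ ≤ k`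
(the set of all masks if `λ̂ = k+1`). The test point is `Z 0`, which is i.i.d. with the
calibration points `Z 1, …, Z (n₁+n₂)`. Then
`P(max_{ŷ ∈ C_{λ̂}(X^test)} IoU(Y^test, ŷ) > τ) ≥ 1 − α`. -/
theorem finite_sample_conformal_validity
    [MeasurableSpace 𝒳] (hk : 1 ≤ k)
    {Ω : Type*} [MeasurableSpace Ω] (Pr : Measure Ω) [IsProbabilityMeasure Pr]
    (P : Measure (𝒳 × Mask W H)) [IsProbabilityMeasure P]
    (f : 𝒳 → Fin k → Mask W H) (hf : ∀ j, Measurable (fun x => f x j))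
    (α τ η : ℝ) (hα : α ∈ Set.Ioo (0:ℝ) 1) (hτ : τ ∈ Set.Ioo (0:ℝ) 1)
    (hη : η ∈ Set.Ioo (0:ℝ) 1)
    (n₁ n₂ : ℕ) (hn₁ : 0 < n₁) (hn₂ : 0 < n₂) (hn₂α : (1 - α) / α ≤ (n₂ : ℝ))
    (Z : ℕ → Ω → 𝒳 × Mask W H) (hZmeas : ∀ i, Measurable (Z i))
    (hindep : iIndepFun Z Pr)
    (hlaw : ∀ i, Measure.map (Z i) Pr = P)
    -- greedy ranking of the parameters based on the first n₁ calibration samples: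
    -- L[r] is the smallest index maximizing the number of newly covered points
    (L : Ω → Fin k → Fin k)
    (hL : ∀ (ω : Ω) (r j : Fin k),
      gain (covSet f τ (fun i => Z i ω) n₁) (L ω) r j
          ≤ gain (covSet f τ (fun i => Z i ω) n₁) (L ω) r (L ω r) ∧
        (gain (covSet f τ (fun i => Z i ω) n₁) (L ω) r j
            = gain (covSet f τ (fun i => Z i ω) n₁) (L ω) r (L ω r) → L ω r ≤ j))
    -- λ̂: the smallest λ ∈ {1,…,k} whose empirical risk on the n₂ second-stage
    -- samples is ≤ α − (1−α)/n₂, and k+1 if no such λ exists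
    (lamhat : Ω → ℕ)
    (hlamhat : ∀ ω : Ω,
      (lamhat ω ∈ Finset.Icc 1 k ∧
        empRisk f τ η (L ω) (fun i => Z i ω) n₁ n₂ (lamhat ω) ≤ α - (1 - α) / n₂ ∧
        ∀ lam ∈ Finset.Icc 1 k,
          empRisk f τ η (L ω) (fun i => Z i ω) n₁ n₂ lam ≤ α - (1 - α) / n₂ →
            lamhat ω ≤ lam) ∨
      (lamhat ω = k + 1 ∧
        ∀ lam ∈ Finset.Icc 1 k,
          ¬ (empRisk f τ η (L ω) (fun i => Z i ω) n₁ n₂ lam ≤ α - (1 - α) / n₂))) :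
    ENNReal.ofReal (1 - α) ≤
      Pr {ω | ∃ yhat ∈ (if lamhat ω = k + 1 then (Set.univ : Set (Mask W H))
          else {y | y ∈ uniqueStar η (predList f (L ω) (lamhat ω) (Z 0 ω).1)}),
        τ < IoU (Z 0 ω).2 yhat} :=
  finite_sample_conformal_validity_general Pr P f hf α τ η hα hτ n₁ n₂ hn₂ Z hZmeas hindep hlaw L hL
    lamhat hlamhat
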